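/- arXiv:1303.1609 — 4 statements merged into one kernel-verified Lean document; each statement's English description precedes it below -/
import Mathlib

section
/- For positive reals λ_BS, λ_e and α > 0, the integral ∫₀^∞ [1 - exp(-(λ_BS/λ_e)·2^{-2t/α})] dt equals (α/(2 ln 2))·[γ + ln(λ_BS/λ_e) + E₁(λ_BS/λ_e)], where E₁ is the exponential integral and γ the Euler–Mascheroni constant. -/
/-!
Since `2 ^ (-2t/α) = exp (-k t)` with `k = 2 log 2 / α`, the substitution
`u = c exp (-k t)`, `c = λ_BS/λ_e`, turns the integral into `k⁻¹ ∫₀^c (1 - e^{-u}) / u du`.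
Integrating by parts against `log u`, on `(0, c]` and on `(c, ∞)`, reduces this to
`∫₀^∞ e^{-u} log u du = Γ'(1) = -γ`.
-/

open MeasureTheory Real

/-- The exponential integral `E₁(x) = ∫ₓ^∞ e^{-t}/t dt`. -/
noncomputable def expIntegralE1 (x : ℝ) : ℝ := ∫ t in Set.Ioi x, Real.exp (-t) / t

open Set Filter Topology

lemma integrableOn_exp_neg_mul_log :
    IntegrableOn (fun u ↦ exp (-u) * log u) (Ioi 0) := by
  have hIoc : IntegrableOn (fun u ↦ exp (-u) * log u) (Ioc 0 1) :=
    IntegrableOn.continuousOn_mul_of_subset (K := Icc 0 1) (by fun_prop)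
      intervalIntegral.intervalIntegrable_log'.1 isCompact_Icc measurableSet_Ioc
      Ioc_subset_Icc_self
  have hIoi : IntegrableOn (fun u ↦ exp (-u) * log u) (Ioi 1) := by
    have hGamma : IntegrableOn (fun u ↦ exp (-u) * u) (Ioi 1) := by
      simpa [show (2 : ℝ) - 1 = 1 by norm_num] using
        (GammaIntegral_convergent two_pos).mono_set (Ioi_subset_Ioi zero_le_one)
    refine hGamma.mono' (by fun_prop) ((ae_restrict_iff' measurableSet_Ioi).2 (ae_of_all _ ?_))
    intro u (hu : 1 < u)
    rw [norm_mul, norm_of_nonneg (exp_pos _).le, norm_of_nonneg (log_nonneg hu.le)]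
    gcongr
    exact (log_le_sub_one_of_pos (by linarith)).trans (by linarith)
  simpa [Ioc_union_Ioi_eq_Ioi zero_le_one] using hIoc.union hIoi

lemma integral_exp_neg_mul_log_Ioi_zero :
    ∫ u in Ioi 0, exp (-u) * log u = -eulerMascheroniConstant := by
  have hGammaIntegral := Complex.hasDerivAt_GammaIntegral (s := 1) (by simp)
  have hGamma : Complex.Gamma =ᶠ[𝓝 1] Complex.GammaIntegral := by
    filter_upwards [Complex.continuous_re.isOpen_preimage _ isOpen_Ioi |>.mem_nhds
      (by simp : (1 : ℂ) ∈ Complex.re ⁻¹' Ioi 0)] with s hs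
    exact Complex.Gamma_eq_integral hs
  have hderiv :=
    (hGammaIntegral.congr_of_eventuallyEq hGamma).unique Complex.hasDerivAt_Gamma_one
  simp only [sub_self, Complex.cpow_zero, one_mul] at hderiv
  have hℂ : ((∫ u in Ioi 0, exp (-u) * log u : ℝ) : ℂ)
      = -(eulerMascheroniConstant : ℂ) := by
    rw [← integral_complex_ofReal, ← hderiv]
    simp only [Complex.ofReal_mul, mul_comm]
  exact_mod_cast hℂ

lemma tendsto_exp_neg_mul_log_atTop : Tendsto (fun u ↦ exp (-u) * log u) atTop (𝓝 0) := by
  have h : log =o[atTop] exp :=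
    isLittleO_log_id_atTop.trans (by simpa using isLittleO_pow_exp_atTop (n := 1) :
      (fun u : ℝ ↦ u) =o[atTop] exp)
  refine h.tendsto_div_nhds_zero.congr fun u ↦ ?_
  rw [exp_neg, div_eq_inv_mul]

lemma integrableOn_exp_neg_div {c : ℝ} (hc : 0 < c) :
    IntegrableOn (fun u ↦ exp (-u) / u) (Ioi c) := by
  have hexp : IntegrableOn (fun u ↦ c⁻¹ * exp (-u)) (Ioi c) := by
    have := (exp_neg_integrableOn_Ioi c one_pos).const_mul c⁻¹
    simp only [neg_one_mul] at this
    exact this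
  refine hexp.mono'
    ((continuousOn_of_forall_continuousAt fun u (hu : c < u) ↦ ?_).aestronglyMeasurable
      measurableSet_Ioi)
    ((ae_restrict_iff' measurableSet_Ioi).2 (ae_of_all _ fun u (hu : c < u) ↦ ?_))
  · exact (continuous_exp.comp continuous_neg).continuousAt.div continuousAt_id (hc.trans hu).ne'
  · rw [norm_div, norm_of_nonneg (exp_pos _).le, norm_of_nonneg (hc.trans hu).le, div_eq_inv_mul]
    gcongr

lemma integral_exp_neg_mul_log_Ioi {c : ℝ} (hc : 0 < c) :
    ∫ u in Ioi c, exp (-u) * log u = exp (-c) * log c + expIntegralE1 c := by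
  have hderiv : ∀ x ∈ Ioi c, HasDerivAt (fun u ↦ -(exp (-u) * log u))
      (exp (-x) * log x - exp (-x) / x) x := by
    intro x (hx : c < x)
    have := (((hasDerivAt_neg x).exp).mul (hasDerivAt_log (hc.trans hx).ne')).neg
    exact this.congr_deriv (by rw [div_eq_mul_inv]; ring)
  have hint_log : IntegrableOn (fun u ↦ exp (-u) * log u) (Ioi c) :=
    integrableOn_exp_neg_mul_log.mono_set (Ioi_subset_Ioi hc.le)
  have hFTC := integral_Ioi_of_hasDerivAt_of_tendsto
    (by fun_prop (disch := exact hc.ne') : ContinuousWithinAt _ (Ici c) c) hderiv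
    (hint_log.sub (integrableOn_exp_neg_div hc)) (by simpa using tendsto_exp_neg_mul_log_atTop.neg)
  rw [integral_sub hint_log (integrableOn_exp_neg_div hc)] at hFTC
  rw [expIntegralE1]
  linarith

lemma integrableOn_one_sub_exp_neg_div (c : ℝ) :
    IntegrableOn (fun u ↦ (1 - exp (-u)) / u) (Ioc 0 c) := by
  refine (integrableOn_const (C := 1) measure_Ioc_lt_top.ne).mono'
    ((continuousOn_of_forall_continuousAt fun u (hu : u ∈ Ioc 0 c) ↦ ?_).aestronglyMeasurable
      measurableSet_Ioc)
    ((ae_restrict_iff' measurableSet_Ioc).2 (ae_of_all _ fun u (hu : u ∈ Ioc 0 c) ↦ ?_))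
  · exact ContinuousAt.div (by fun_prop) continuousAt_id hu.1.ne'
  · rw [norm_div, norm_of_nonneg (by simpa using hu.1.le), norm_of_nonneg hu.1.le,
      div_le_one hu.1]
    linarith [one_sub_le_exp_neg u]

lemma continuousWithinAt_one_sub_exp_neg_mul_log_zero :
    ContinuousWithinAt (fun u ↦ (1 - exp (-u)) * log u) (Ici 0) 0 := by
  have hmul_log : Tendsto (fun u ↦ u * log u) (𝓝[Ici 0] 0) (𝓝 0) := by
    simpa [ContinuousWithinAt] using continuous_mul_log.continuousWithinAt (s := Ici 0) (x := 0)
  rw [ContinuousWithinAt, log_zero, mul_zero]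
  refine squeeze_zero_norm' ?_ (by simpa using hmul_log.norm)
  filter_upwards [self_mem_nhdsWithin] with u (hu : 0 ≤ u)
  rw [norm_mul, norm_of_nonneg (by simpa using hu), norm_eq_abs]
  gcongr
  linarith [one_sub_le_exp_neg u, le_abs_self u]

lemma integral_one_sub_exp_neg_div_Ioc_eq_sub {c : ℝ} (hc : 0 ≤ c) :
    ∫ u in Ioc 0 c, (1 - exp (-u)) / u
      = (1 - exp (-c)) * log c - ∫ u in Ioc 0 c, exp (-u) * log u := by
  have hderiv : ∀ x ∈ Ioo 0 c, HasDerivAt (fun u ↦ (1 - exp (-u)) * log u)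
      (exp (-x) * log x + (1 - exp (-x)) / x) x := by
    intro x hx
    have := (((hasDerivAt_neg x).exp).const_sub 1).mul (hasDerivAt_log hx.1.ne')
    exact this.congr_deriv (by rw [div_eq_mul_inv]; ring)
  have hcont : ContinuousOn (fun u ↦ (1 - exp (-u)) * log u) (Icc 0 c) := by
    intro x hx
    rcases hx.1.eq_or_lt with rfl | hx0
    · exact continuousWithinAt_one_sub_exp_neg_mul_log_zero.mono Icc_subset_Ici_self
    · exact (ContinuousAt.mul (by fun_prop) (continuousAt_log hx0.ne')).continuousWithinAt
  have hint_log : IntegrableOn (fun u ↦ exp (-u) * log u) (Ioc 0 c) :=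
    integrableOn_exp_neg_mul_log.mono_set Ioc_subset_Ioi_self
  have hFTC := intervalIntegral.integral_eq_sub_of_hasDeriv_right_of_le hc hcont
    (fun x hx ↦ (hderiv x hx).hasDerivWithinAt)
    ((intervalIntegrable_iff_integrableOn_Ioc_of_le hc).2
      (hint_log.add (integrableOn_one_sub_exp_neg_div c)))
  rw [intervalIntegral.integral_of_le hc, integral_add hint_log
    (integrableOn_one_sub_exp_neg_div c)] at hFTC
  simp only [log_zero, mul_zero, sub_zero] at hFTC
  linarith

lemma integral_one_sub_exp_neg_div_Ioc {c : ℝ} (hc : 0 < c) :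
    ∫ u in Ioc 0 c, (1 - exp (-u)) / u = eulerMascheroniConstant + log c + expIntegralE1 c := by
  have hsplit : (∫ u in Ioc 0 c, exp (-u) * log u) + ∫ u in Ioi c, exp (-u) * log u
      = -eulerMascheroniConstant := by
    rw [← integral_exp_neg_mul_log_Ioi_zero, ← Ioc_union_Ioi_eq_Ioi hc.le,
      setIntegral_union (Ioc_disjoint_Ioi le_rfl) measurableSet_Ioi
        (integrableOn_exp_neg_mul_log.mono_set Ioc_subset_Ioi_self)
        (integrableOn_exp_neg_mul_log.mono_set (Ioi_subset_Ioi hc.le))]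
  rw [integral_one_sub_exp_neg_div_Ioc_eq_sub hc.le]
  linear_combination -hsplit + integral_exp_neg_mul_log_Ioi hc

lemma image_mul_exp_neg_mul_Ioi {c k : ℝ} (hc : 0 < c) (hk : 0 < k) :
    (fun t ↦ c * exp (-(k * t))) '' Ioi 0 = Ioo 0 c := by
  ext u
  constructor
  · rintro ⟨t, ht : 0 < t, rfl⟩
    exact ⟨by positivity, mul_lt_of_lt_one_right hc (exp_lt_one_iff.2 (by nlinarith))⟩
  · rintro ⟨hu, huc⟩
    refine ⟨log (c / u) / k, div_pos (log_pos ((one_lt_div hu).2 huc)) hk, ?_⟩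
    show c * exp (-(k * (log (c / u) / k))) = u
    rw [mul_div_cancel₀ _ hk.ne', exp_neg, exp_log (div_pos hc hu)]
    field_simp

lemma integral_comp_mul_exp_neg_mul_Ioi {E : Type*} [NormedAddCommGroup E] [NormedSpace ℝ E]
    (g : ℝ → E) {c k : ℝ} (hc : 0 < c) (hk : 0 < k) :
    ∫ t in Ioi 0, g (c * exp (-(k * t))) = k⁻¹ • ∫ u in Ioo 0 c, u⁻¹ • g u := by
  have hderiv : ∀ t ∈ Ioi (0 : ℝ), HasDerivWithinAt (fun t ↦ c * exp (-(k * t)))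
      (-(k * (c * exp (-(k * t))))) (Ioi 0) t := fun t _ ↦
    ((((hasDerivAt_id t).const_mul k).neg.exp.const_mul c).congr_deriv
      (by simp; ring)).hasDerivWithinAt
  have hinj : InjOn (fun t ↦ c * exp (-(k * t))) (Ioi 0) := fun s _ t _ hst ↦ by
    simpa [hc.ne', hk.ne'] using hst
  rw [← image_mul_exp_neg_mul_Ioi hc hk,
    integral_image_eq_integral_abs_deriv_smul measurableSet_Ioi hderiv hinj, ← integral_smul]
  refine setIntegral_congr_fun measurableSet_Ioi fun t _ ↦ ?_
  have hpos : 0 < c * exp (-(k * t)) := by positivity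
  rw [abs_neg, abs_of_pos (mul_pos hk hpos), smul_smul, smul_smul,
    inv_mul_cancel_left₀ hk.ne', mul_inv_cancel₀ hpos.ne', one_smul]

theorem stmt_3 (lBS le α : ℝ) (hBS : 0 < lBS) (he : 0 < le) (hα : 0 < α) :
    ∫ t in Set.Ioi (0:ℝ), (1 - Real.exp (-(lBS / le) * (2:ℝ) ^ (-(2 * t / α))))
    = α / (2 * Real.log 2) *
        (Real.eulerMascheroniConstant + Real.log (lBS / le) + expIntegralE1 (lBS / le)) := by
  set c := lBS / le
  have hc : 0 < c := div_pos hBS he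
  have hk : 0 < 2 * log 2 / α := by positivity
  have hpow (t : ℝ) : -c * (2 : ℝ) ^ (-(2 * t / α)) = -(c * exp (-(2 * log 2 / α * t))) := by
    rw [rpow_def_of_pos two_pos, neg_mul]
    ring_nf
  simp_rw [hpow]
  rw [integral_comp_mul_exp_neg_mul_Ioi (fun u ↦ 1 - exp (-u)) hc hk, inv_div,
    ← integral_Ioc_eq_integral_Ioo, ← integral_one_sub_exp_neg_div_Ioc hc]
  simp_rw [smul_eq_mul, inv_mul_eq_div]
end

section
/- For positive reals λ_BS, λ_e, D₀ and α > 0: ∫₀^∞ [1/(1 + (λ_e/λ_BS)·2^{2t/α})]·(1 - exp[-π(λ_e + λ_BS·2^{-2t/α})·D₀²]) dt = (α/(2 ln 2))·[ln((λ_BS + λ_e)/λ_e) - E₁(πλ_e D₀²) + E₁(π(λ_e + λ_BS)D₀²)], where E₁(x) = ∫ₓ^∞ e^{-t}/t dt. -/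
/-!
Writing `2^(2t/α) = exp (k t)` with `k = 2 log 2 / α`, the exponent is
`v t = a + b exp (-k t)` with `a = π λ_e D₀²`, `b = π λ_BS D₀²`, and the integrand equals
`-k⁻¹ v'(t) (1 - e^{-v t}) / v t`. Since `(1 - e^{-u}) / u` is the derivative of `log u + E₁ u`,
the integral is `k⁻¹` times the increment of `log + E₁` from `v ∞ = a` to `v 0 = a + b`.
-/

open MeasureTheory Real Set Filter Topology

lemma integrableOn_exp_neg_div_Ioi {x : ℝ} (hx : 0 < x) :
    IntegrableOn (fun t => exp (-t) / t) (Ioi x) := by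
  refine ((exp_neg_integrableOn_Ioi x one_pos).const_mul x⁻¹).mono' ?_ ?_
  · refine ContinuousOn.aestronglyMeasurable ?_ measurableSet_Ioi
    fun_prop (disch := intro t ht; exact (hx.trans ht).ne')
  · filter_upwards [ae_restrict_mem measurableSet_Ioi] with t (ht : x < t)
    rw [norm_of_nonneg (by positivity [hx.trans ht]), neg_one_mul, div_eq_mul_inv, mul_comm]
    exact mul_le_mul_of_nonneg_right (inv_anti₀ hx ht.le) (exp_pos _).le

lemma expIntegralE1_sub {x y : ℝ} (hx : 0 < x) (hy : 0 < y) :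
    expIntegralE1 x - expIntegralE1 y = ∫ t in x..y, exp (-t) / t :=
  intervalIntegral.integral_Ioi_sub_Ioi' (integrableOn_exp_neg_div_Ioi hx)
    (integrableOn_exp_neg_div_Ioi hy)

lemma hasDerivAt_expIntegralE1 {x : ℝ} (hx : 0 < x) :
    HasDerivAt expIntegralE1 (-(exp (-x) / x)) x := by
  have hcont : ContinuousOn (fun t => exp (-t) / t) (Ioi 0) := by
    fun_prop (disch := intro t ht; exact (ne_of_gt ht))
  have hFTC : HasDerivAt (fun y => ∫ t in x..y, exp (-t) / t) (exp (-x) / x) x :=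
    intervalIntegral.integral_hasDerivAt_right (by simp)
      (hcont.stronglyMeasurableAtFilter isOpen_Ioi x hx)
      (hcont.continuousAt (Ioi_mem_nhds hx))
  refine (hFTC.const_sub (expIntegralE1 x)).congr_of_eventuallyEq ?_
  filter_upwards [Ioi_mem_nhds hx] with y (hy : 0 < y)
  rw [← expIntegralE1_sub hx hy, sub_sub_cancel]

lemma hasDerivAt_log_add_expIntegralE1 {u : ℝ} (hu : 0 < u) :
    HasDerivAt (fun u => log u + expIntegralE1 u) ((1 - exp (-u)) / u) u :=
  ((hasDerivAt_log hu.ne').add (hasDerivAt_expIntegralE1 hu)).congr_deriv (by ring)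

lemma integral_Ioi_decay_ratio_mul_one_sub_exp_neg {a b k : ℝ} (ha : 0 < a) (hb : 0 ≤ b)
    (hk : 0 < k) :
    ∫ t in Ioi 0, b * exp (-(k * t)) / (a + b * exp (-(k * t))) *
        (1 - exp (-(a + b * exp (-(k * t)))))
      = k⁻¹ * (log ((a + b) / a) - expIntegralE1 a + expIntegralE1 (a + b)) := by
  set v : ℝ → ℝ := fun t => a + b * exp (-(k * t))
  have hv_pos (t : ℝ) : 0 < v t := by positivity
  have hv_deriv (t : ℝ) : HasDerivAt v (b * (exp (-(k * t)) * -k)) t :=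
    ((((hasDerivAt_id t).const_mul k).neg.exp.const_mul b).const_add a).congr_deriv (by simp)
  have hv_lim : Tendsto v atTop (𝓝 a) := by
    have : Tendsto (fun t => exp (-(k * t))) atTop (𝓝 0) :=
      tendsto_exp_atBot.comp (tendsto_neg_atTop_atBot.comp (tendsto_id.const_mul_atTop hk))
    simpa using (this.const_mul b).const_add a
  set G : ℝ → ℝ := fun u => log u + expIntegralE1 u
  have hF_deriv (t : ℝ) : HasDerivAt (fun t => -k⁻¹ * G (v t))
      (b * exp (-(k * t)) / v t * (1 - exp (-v t))) t :=
    ((hasDerivAt_log_add_expIntegralE1 (hv_pos t)).comp t (hv_deriv t)).const_mul (-k⁻¹)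
      |>.congr_deriv (by field_simp)
  have hF_lim : Tendsto (fun t => -k⁻¹ * G (v t)) atTop (𝓝 (-k⁻¹ * G a)) :=
    ((hasDerivAt_log_add_expIntegralE1 ha).continuousAt.tendsto.comp hv_lim).const_mul _
  have hF_deriv_nonneg (t : ℝ) : 0 ≤ b * exp (-(k * t)) / v t * (1 - exp (-v t)) := by
    have hvt := hv_pos t
    have : exp (-v t) ≤ 1 := exp_le_one_iff.2 (neg_nonpos.2 hvt.le)
    positivity
  rw [integral_Ioi_of_hasDerivAt_of_nonneg' (fun t _ => hF_deriv t)
    (fun t _ => hF_deriv_nonneg t) hF_lim, log_div (by positivity) ha.ne']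
  simp only [G, v, mul_zero, neg_zero, exp_zero, mul_one]
  ring

theorem stmt_9 (lBS le D₀ α : ℝ) (hBS : 0 < lBS) (he : 0 < le) (hD : 0 < D₀)
    (hα : 0 < α) :
    ∫ t in Set.Ioi (0:ℝ),
      (1 / (1 + (le / lBS) * (2:ℝ) ^ (2 * t / α))) *
        (1 - Real.exp (-(π * (le + lBS * (2:ℝ) ^ (-(2 * t / α))) * D₀ ^ 2)))
    = α / (2 * Real.log 2) *
        (Real.log ((lBS + le) / le) - expIntegralE1 (π * le * D₀ ^ 2)
          + expIntegralE1 (π * (le + lBS) * D₀ ^ 2)) := by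
  have hk : 0 < 2 * log 2 / α := by positivity [log_pos one_lt_two]
  convert integral_Ioi_decay_ratio_mul_one_sub_exp_neg (a := π * le * D₀ ^ 2)
    (b := π * lBS * D₀ ^ 2) (by positivity) (by positivity) hk using 1
  · refine setIntegral_congr_fun measurableSet_Ioi fun t _ => ?_
    have hexp : exp (-(2 * log 2 / α * t)) = ((2:ℝ) ^ (2 * t / α))⁻¹ := by
      rw [rpow_def_of_pos two_pos, ← exp_neg]; ring_nf
    have hpos : 0 < (2:ℝ) ^ (2 * t / α) := by positivity
    rw [rpow_neg zero_le_two, hexp]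
    generalize (2:ℝ) ^ (2 * t / α) = E at hpos ⊢
    field_simp
    ring
  · rw [show (π * le * D₀ ^ 2 + π * lBS * D₀ ^ 2) = π * (le + lBS) * D₀ ^ 2 by ring,
      show π * (le + lBS) * D₀ ^ 2 / (π * le * D₀ ^ 2) = (lBS + le) / le by
        field_simp; ring, inv_div]
end

section
/- Let S be the set of x ∈ ℝ² such that ‖e - x‖ > c‖x‖ for all e in a given finite or locally finite set E ⊂ ℝ², where c ≥ 1. Let C be the Voronoi cell of the origin with respect to E ∪ {0}, i.e., C = {x : ‖x‖ ≤ ‖e - x‖ for all e ∈ E}. If C is bounded and convex, then the area of S satisfies area(S) ≤ (4/(1+c)²)·area(C). -/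
open MeasureTheory Pointwise Module

/-- If `S` is the set of points `x ∈ ℝ²` with `‖e - x‖ > c‖x‖` for every `e` in a set `E`,
and `C` is the Voronoi cell of the origin w.r.t. `E ∪ {0}`, then provided `C` is bounded
and convex and `c ≥ 1`, `area(S) ≤ (4/(1+c)²)·area(C)`. -/
theorem stmt_11 (c : ℝ) (hc : 1 ≤ c) (E : Set (EuclideanSpace ℝ (Fin 2)))
    (S C : Set (EuclideanSpace ℝ (Fin 2)))
    (hS : S = {x | ∀ e ∈ E, ‖e - x‖ > c * ‖x‖})
    (hC : C = {x | ∀ e ∈ E, ‖x‖ ≤ ‖e - x‖})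
    (hbdd : Bornology.IsBounded C) (hconv : Convex ℝ C) :
    volume S ≤ ENNReal.ofReal (4 / (1 + c) ^ 2) * volume C := by
  have hcpos : (0:ℝ) < 1 + c := by linarith
  have hsub : S ⊆ (2 / (1 + c)) • C := by
    intro x hx
    refine ⟨((1 + c) / 2) • x, ?_, ?_⟩
    · rw [hC]
      intro e he
      have hxe := (hS ▸ hx) e he
      have hnorm : ‖((1 + c) / 2) • x‖ = ((1 + c) / 2) * ‖x‖ := by
        rw [norm_smul, Real.norm_eq_abs, abs_of_pos (by linarith)]
      rw [hnorm]
      have : ‖e - ((1 + c) / 2) • x‖ ≥ ‖e - x‖ - ‖x - ((1 + c) / 2) • x‖ := by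
        have := norm_sub_sub_norm_sub_le_norm_sub (e) (x) (((1 + c) / 2) • x)
        have h' := norm_sub_norm_le (e - x) (e - ((1 + c) / 2) • x)
        have : e - x - (e - ((1 + c) / 2) • x) = ((1 + c) / 2) • x - x := by abel
        nlinarith [norm_sub_rev (x) (((1+c)/2) • x), this ▸ h']
      have hxs : ‖x - ((1 + c) / 2) • x‖ = ((c - 1) / 2) * ‖x‖ := by
        have : x - ((1 + c) / 2) • x = (-((c - 1) / 2)) • x := by
          module
        rw [this, norm_smul, Real.norm_eq_abs, abs_neg, abs_of_nonneg (by linarith)]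
      nlinarith
    · show (2 / (1 + c)) • ((1 + c) / 2) • x = x
      rw [smul_smul]
      have : (2 / (1 + c)) * ((1 + c) / 2) = 1 := by field_simp
      rw [this, one_smul]
  calc volume S ≤ volume ((2 / (1 + c)) • C) := measure_mono hsub
    _ = ENNReal.ofReal ((2 / (1 + c)) ^ finrank ℝ (EuclideanSpace ℝ (Fin 2))) * volume C :=
        Measure.addHaar_smul_of_nonneg _ (by positivity) C
    _ = ENNReal.ofReal (4 / (1 + c) ^ 2) * volume C := by
        rw [finrank_euclideanSpace_fin]
        congr 1
        field_simp
        ring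
end

section
/- For c ≥ 1 and points x, e ∈ ℝ², if ‖e - x‖ > c‖x‖ then ((1+c)/2)·x lies strictly in the half-plane {y ∈ ℝ² : ‖y‖ < ‖e - y‖}; equivalently, the region {x : ‖e - x‖ > c‖x‖} is contained in the scaling by factor 2/(1+c) of the open half-plane of points closer to 0 than to e. -/
theorem stmt_12 (c : ℝ) (hc : 1 ≤ c) (x e : EuclideanSpace ℝ (Fin 2))
    (h : ‖e - x‖ > c * ‖x‖) :
    ‖((1 + c) / 2) • x‖ < ‖e - ((1 + c) / 2) • x‖ := by
  set t : ℝ := (1 + c) / 2 with ht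
  have ht1 : 1 ≤ t := by unfold t; linarith
  have key : e - x = (e - t • x) - (1 - t) • x := by
    rw [sub_smul, one_smul]; abel
  have hnorm : ‖e - x‖ ≤ ‖e - t • x‖ + ‖(1 - t) • x‖ := by
    rw [key]; exact norm_sub_le _ _
  have h2 : ‖(1 - t) • x‖ = (t - 1) * ‖x‖ := by
    rw [norm_smul, Real.norm_eq_abs, abs_of_nonpos (by linarith), neg_sub]
  have h3 : ‖t • x‖ = t * ‖x‖ := by
    rw [norm_smul, Real.norm_eq_abs, abs_of_nonneg (by linarith)]
  have : c * ‖x‖ - (t - 1) * ‖x‖ = t * ‖x‖ := by unfold t; ring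
  nlinarith [norm_nonneg x]
end
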